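/- For every a > 0 there exist constants C > 0 and r₀ > 0 such that for all r ∈ (0, r₀) and all θ ∈ [−arctan a, arctan a], | ∫_0^θ (i r e^{it} / sinh(r e^{it})) dt − iθ | ≤ C r². (This is the statement that the integral of 1/sinh along the circular arc of radius r from the point r to the point r e^{iθ} equals iθ + O(r²) uniformly in the wedge V_a.) -/

import Mathlib

open scoped Real

/-!
Near `0`, `sinh w = w + O(‖w‖³)`, so `w / sinh w = 1 + O(‖w‖²)`. On the arc `w = r e^{it}` the
integrand is `i · w / sinh w`, hence differs from `i` by at most `2 r²`, and integrating over
`[0, θ]` with `|θ| < π/2` gives the bound with `C = π`.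
-/

theorem Complex.norm_sinh_sub_self_le {w : ℂ} (hw : ‖w‖ ≤ 1) : ‖sinh w - w‖ ≤ ‖w‖ ^ 3 := by
  have taylor : ∀ z : ℂ, ‖z‖ ≤ 1 → ‖exp z - (1 + z + z ^ 2 / 2)‖ ≤ ‖z‖ ^ 3 := fun z hz => by
    have := exp_bound hz (n := 3) (by norm_num)
    norm_num [Finset.sum_range_succ, Nat.factorial] at this
    linarith [pow_nonneg (norm_nonneg z) 3]
  have odd_part : sinh w - w =
      ((exp w - (1 + w + w ^ 2 / 2)) - (exp (-w) - (1 + -w + (-w) ^ 2 / 2))) / 2 := by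
    rw [sinh]; ring
  have hpos := taylor w hw
  have hneg := taylor (-w) (by rwa [norm_neg])
  rw [norm_neg] at hneg
  rw [odd_part, norm_div, Complex.norm_two]
  linarith [norm_sub_le (exp w - (1 + w + w ^ 2 / 2)) (exp (-w) - (1 + -w + (-w) ^ 2 / 2))]

theorem Complex.norm_div_two_le_norm_sinh {w : ℂ} (hw : ‖w‖ ≤ 1 / 2) :
    ‖w‖ / 2 ≤ ‖sinh w‖ := by
  have htri := norm_sub_norm_le w (w - sinh w)
  rw [sub_sub_cancel, norm_sub_rev] at htri
  have hcube : ‖w‖ ^ 3 ≤ ‖w‖ / 2 := by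
    have : ‖w‖ ^ 2 ≤ 1 / 2 := by nlinarith [norm_nonneg w]
    nlinarith [norm_nonneg w]
  linarith [norm_sinh_sub_self_le (hw.trans (by norm_num))]

theorem Complex.sinh_ne_zero_of_norm_le {w : ℂ} (hw0 : w ≠ 0) (hw : ‖w‖ ≤ 1 / 2) :
    sinh w ≠ 0 := by
  rw [← norm_pos_iff]
  exact (div_pos (norm_pos_iff.mpr hw0) two_pos).trans_le (norm_div_two_le_norm_sinh hw)

theorem Complex.norm_div_sinh_sub_one_le {w : ℂ} (hw0 : w ≠ 0) (hw : ‖w‖ ≤ 1 / 2) :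
    ‖w / sinh w - 1‖ ≤ 2 * ‖w‖ ^ 2 := by
  have hsinh := sinh_ne_zero_of_norm_le hw0 hw
  rw [div_sub_one hsinh, norm_div, norm_sub_rev, div_le_iff₀ (norm_pos_iff.mpr hsinh)]
  calc ‖sinh w - w‖ ≤ ‖w‖ ^ 3 := norm_sinh_sub_self_le (hw.trans (by norm_num))
    _ = 2 * ‖w‖ ^ 2 * (‖w‖ / 2) := by ring
    _ ≤ 2 * ‖w‖ ^ 2 * ‖sinh w‖ := by gcongr; exact norm_div_two_le_norm_sinh hw

theorem intervalIntegral.norm_integral_sub_smul_le {E : Type*} [NormedAddCommGroup E]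
    [NormedSpace ℝ E] [CompleteSpace E] {f : ℝ → E} {c : E} {a b M : ℝ}
    (hf : IntervalIntegrable f MeasureTheory.volume a b)
    (h : ∀ t ∈ Set.uIoc a b, ‖f t - c‖ ≤ M) :
    ‖(∫ t in a..b, f t) - (b - a) • c‖ ≤ M * |b - a| := by
  rw [← integral_const, ← integral_sub hf intervalIntegrable_const]
  exact norm_integral_le_of_norm_le_const h

open Complex in
theorem norm_arc_integrand_sub_I_le {r : ℝ} (hr : 0 < r) (hr' : r ≤ 1 / 2) (t : ℝ) :
    ‖I * r * exp (I * t) / sinh (r * exp (I * t)) - I‖ ≤ 2 * r ^ 2 := by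
  set w : ℂ := r * exp (I * t)
  have hw : ‖w‖ = r := by simp [w, hr.le]
  have hw0 : w ≠ 0 := norm_pos_iff.mp (hw ▸ hr)
  calc ‖I * r * exp (I * t) / sinh w - I‖ = ‖I * (w / sinh w - 1)‖ := by
        rw [mul_sub, mul_one, mul_assoc, mul_div_assoc]
    _ = ‖w / sinh w - 1‖ := by rw [norm_mul, norm_I, one_mul]
    _ ≤ 2 * r ^ 2 := hw ▸ norm_div_sinh_sub_one_le hw0 (hw ▸ hr')

theorem arc_integral_one_div_sinh (a : ℝ) :
    ∃ C : ℝ, 0 < C ∧ ∃ r₀ : ℝ, 0 < r₀ ∧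
      ∀ r : ℝ, 0 < r → r < r₀ →
        ∀ θ : ℝ, -Real.arctan a ≤ θ → θ ≤ Real.arctan a →
          ‖((∫ t in (0 : ℝ)..θ,
              Complex.I * r * Complex.exp (Complex.I * t) /
                Complex.sinh (r * Complex.exp (Complex.I * t))) - Complex.I * θ)‖ ≤
            C * r ^ 2 := by
  refine ⟨π, Real.pi_pos, 1 / 2, one_half_pos, fun r hr hr' θ hθ₁ hθ₂ => ?_⟩
  have hsinh : ∀ t : ℝ, Complex.sinh (r * Complex.exp (Complex.I * t)) ≠ 0 := fun t =>
    Complex.sinh_ne_zero_of_norm_le (by simp [hr.ne'])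
      (by simpa [abs_of_pos hr] using hr'.le)
  have hcont : Continuous fun t : ℝ =>
      Complex.I * r * Complex.exp (Complex.I * t) /
        Complex.sinh (r * Complex.exp (Complex.I * t)) :=
    Continuous.div (by fun_prop) (by fun_prop) hsinh
  have hθ : |θ| ≤ π / 2 := by
    have := Real.arctan_lt_pi_div_two a
    exact abs_le.mpr ⟨by linarith, by linarith⟩
  calc _ = ‖(∫ t in (0 : ℝ)..θ, Complex.I * r * Complex.exp (Complex.I * t) /
          Complex.sinh (r * Complex.exp (Complex.I * t))) - (θ - 0) • Complex.I‖ := by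
        rw [sub_zero, Complex.real_smul, mul_comm (θ : ℂ)]
    _ ≤ 2 * r ^ 2 * |θ - 0| := intervalIntegral.norm_integral_sub_smul_le
        (hcont.intervalIntegrable 0 θ) fun t _ => norm_arc_integrand_sub_I_le hr hr'.le t
    _ ≤ π * r ^ 2 := by rw [sub_zero]; nlinarith [sq_nonneg r]
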